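/- Let Q be a symmetric n×n real matrix, A ∈ ℝ^{m×n} with m ≥ n, and suppose the matrix A_{1:n} formed by the first n rows of A is invertible. Let R := (A_{1:n}^{-1})ᵀ Q A_{1:n}^{-1} and let 1 ≤ k < n. If pᵀQp > 0 for every nonzero p ∈ ℝⁿ with A_{1:k} p = 0 (where A_{1:k} is the matrix of the first k rows of A), then the bottom-right (n−k)×(n−k) block R₂₂ := R_{k+1:n, k+1:n} is positive definite. -/

import Mathlib

/-!
Extending `y ∈ ℝ^{n-k}` by `k` leading zeros to `z ∈ ℝⁿ` turns `yᵀ R₂₂ y` into `zᵀ R z`, which is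
`pᵀ Q p` for `p = A_{1:n}⁻¹ z`. Since `A_{1:n} p = z` vanishes in its first `k` entries, `p` lies
in the null space of `A_{1:k}`, and `p ≠ 0` whenever `y ≠ 0`.
-/

open Matrix Function

namespace Matrix

variable {ι κ R : Type*} [Fintype ι] [Fintype κ]

theorem extend_zero_dotProduct [NonUnitalNonAssocSemiring R] {e : ι → κ} (he : Injective e)
    (x : ι → R) (v : κ → R) : extend e x 0 ⬝ᵥ v = x ⬝ᵥ (v ∘ e) :=
  (Fintype.sum_of_injective e he _ _
    (fun j hj ↦ by rw [extend_apply' _ _ _ (by simpa using hj), Pi.zero_apply, zero_mul])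
    (fun i ↦ by rw [he.extend_apply, Function.comp_apply])).symm

theorem submatrix_mulVec_of_injective [NonUnitalCommSemiring R] {μ ν : Type*} (M : Matrix μ κ R)
    (r : ν → μ) {e : ι → κ} (he : Injective e) (y : ι → R) :
    M.submatrix r e *ᵥ y = (M *ᵥ extend e y 0) ∘ r := by
  ext i
  change (fun j ↦ M (r i) (e j)) ⬝ᵥ y = M (r i) ⬝ᵥ extend e y 0
  rw [dotProduct_comm, dotProduct_comm (M (r i)), extend_zero_dotProduct he]
  rfl

theorem star_dotProduct_submatrix_mulVec [NonUnitalCommSemiring R] [StarRing R] (M : Matrix κ κ R)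
    {e : ι → κ} (he : Injective e) (y : ι → R) :
    star y ⬝ᵥ (M.submatrix e e *ᵥ y) = star (extend e y 0) ⬝ᵥ (M *ᵥ extend e y 0) := by
  have hstar : star (extend e y 0) = extend e (star y) 0 := by
    ext j
    rw [Pi.star_apply, apply_extend star]
    congr
    ext
    simp
  rw [submatrix_mulVec_of_injective M e he, hstar, extend_zero_dotProduct he]

theorem posDef_submatrix_of_forall_pos [CommRing R] [PartialOrder R] [StarRing R]
    {M : Matrix κ κ R} (hM : M.IsHermitian) {e : ι → κ} (he : Injective e)
    (hpos : ∀ z : κ → R, z ≠ 0 → (∀ j ∉ Set.range e, z j = 0) → 0 < star z ⬝ᵥ (M *ᵥ z)) :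
    (M.submatrix e e).PosDef := by
  refine posDef_iff_dotProduct_mulVec.2 ⟨hM.submatrix e, fun y hy ↦ ?_⟩
  rw [star_dotProduct_submatrix_mulVec M he]
  refine hpos _ (fun h ↦ hy ?_) fun j hj ↦ extend_apply' _ _ _ (by simpa using hj)
  ext i
  simpa [he.extend_apply] using congrFun h (e i)

theorem dotProduct_transpose_mul_mul_mulVec [CommSemiring R] (C : Matrix κ ι R) (Q : Matrix κ κ R)
    (z : ι → R) :
    z ⬝ᵥ ((Cᵀ * Q * C) *ᵥ z) = (C *ᵥ z) ⬝ᵥ (Q *ᵥ (C *ᵥ z)) := by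
  rw [Matrix.mul_assoc, ← mulVec_mulVec, dotProduct_mulVec, vecMul_transpose, ← mulVec_mulVec]

end Matrix

theorem bottom_right_block_posDef {n m k : ℕ} (hmn : n ≤ m)
    (hkn : k < n)
    (Q : Matrix (Fin n) (Fin n) ℝ) (hQ : Q.IsSymm)
    (A : Matrix (Fin m) (Fin n) ℝ)
    (hinv : IsUnit (A.submatrix (Fin.castLE hmn) id).det)
    (hpd : ∀ p : Fin n → ℝ, p ≠ 0 →
      (∀ i : Fin m, (i : ℕ) < k → (A *ᵥ p) i = 0) → 0 < p ⬝ᵥ (Q *ᵥ p)) :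
    ((((A.submatrix (Fin.castLE hmn) id)⁻¹)ᵀ * Q *
        (A.submatrix (Fin.castLE hmn) id)⁻¹).submatrix
      (fun i : Fin (n - k) => (⟨k + (i : ℕ), by have := i.2; omega⟩ : Fin n))
      (fun j : Fin (n - k) => (⟨k + (j : ℕ), by have := j.2; omega⟩ : Fin n))).PosDef := by
  set B := A.submatrix (Fin.castLE hmn) id
  have hR : ((B⁻¹)ᵀ * Q * B⁻¹).IsHermitian := by
    simpa [conjTranspose_eq_transpose_of_trivial] using
      isHermitian_conjTranspose_mul_mul B⁻¹ (isHermitian_iff_isSymm.2 hQ)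
  refine posDef_submatrix_of_forall_pos hR (fun i j h ↦ Fin.ext (by simpa using congrArg Fin.val h))
    fun z hz hsupp ↦ ?_
  have hBp : B *ᵥ (B⁻¹ *ᵥ z) = z := by rw [mulVec_mulVec, mul_nonsing_inv _ hinv, one_mulVec]
  rw [star_trivial, dotProduct_transpose_mul_mul_mulVec]
  refine hpd _ (fun h ↦ hz (by rw [← hBp, h, mulVec_zero])) fun i hi ↦ ?_
  change (B *ᵥ (B⁻¹ *ᵥ z)) ⟨i, hi.trans hkn⟩ = 0
  rw [hBp]
  exact hsupp _ fun ⟨j, hj⟩ ↦ by simp [Fin.ext_iff] at hj; omega
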